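/- For every play of Morpion Solitaire 5D of length N + 1, the total potential of the board after the first N moves (i.e., computed from the crosses S₀ ∪ {p₁,…,p_N} and the lines L₁,…,L_N only) is at least 4. In other words, playing a further move requires a total potential of at least 4. -/

import Mathlib

/-- The four directions of Morpion Solitaire. -/
def Dir : Set (ℤ × ℤ) := {(1, 0), (0, 1), (1, 1), (1, -1)}

/-- The line (segment) of length 5 starting at `q` in direction `d`:
the set `{q + t • d : t ∈ {0,1,2,3,4}}`. -/
def seg (q d : ℤ × ℤ) : Set (ℤ × ℤ) := {p | ∃ t : ℕ, t ≤ 4 ∧ p = q + (t : ℤ) • d}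

/-- The initial configuration of 36 crosses. -/
def S0 : Set (ℤ × ℤ) := {p |
  ((p.2 = 0 ∨ p.2 = 9) ∧ 3 ≤ p.1 ∧ p.1 ≤ 6) ∨
  ((p.1 = 0 ∨ p.1 = 9) ∧ 3 ≤ p.2 ∧ p.2 ≤ 6) ∨
  ((p.1 = 3 ∨ p.1 = 6) ∧ ((0 ≤ p.2 ∧ p.2 ≤ 3) ∨ (6 ≤ p.2 ∧ p.2 ≤ 9))) ∨
  ((p.2 = 3 ∨ p.2 = 6) ∧ ((0 ≤ p.1 ∧ p.1 ≤ 3) ∨ (6 ≤ p.1 ∧ p.1 ≤ 9)))}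

/-- A play of Morpion Solitaire 5D of length `N`: crosses `p i`, and lines
`seg (q i) (d i)` in directions `d i ∈ Dir`, subject to the rules of 5D.
(Index `i : Fin N` corresponds to move `i + 1`.) -/
structure Play (N : ℕ) where
  p : Fin N → ℤ × ℤ
  q : Fin N → ℤ × ℤ
  d : Fin N → ℤ × ℤ
  d_mem : ∀ i, d i ∈ Dir
  /-- rule (1): the new cross is placed on an empty point -/
  p_not_S0 : ∀ i, p i ∉ S0
  p_new : ∀ i j : Fin N, j < i → p j ≠ p i
  /-- rule (2): the new line passes through the new cross -/
  p_mem : ∀ i, p i ∈ seg (q i) (d i)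
  /-- rule (3): the new line passes only through existing crosses -/
  seg_sub : ∀ i, seg (q i) (d i) ⊆ S0 ∪ {x | ∃ j : Fin N, j ≤ i ∧ p j = x}
  /-- rule (4): two lines in the same direction are disjoint -/
  disj : ∀ i j : Fin N, j < i → d j = d i → seg (q i) (d i) ∩ seg (q j) (d j) = ∅

/-- The set of crosses on the board after the first `n` moves of a play. -/
def crossesUpTo {N : ℕ} (P : Play N) (n : ℕ) : Set (ℤ × ℤ) :=
  S0 ∪ {x | ∃ i : Fin N, (i : ℕ) < n ∧ P.p i = x}

/-- The potential of a cross `C` after the first `n` moves of a play: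
`4` minus the number of the first `n` lines that cover `C`. -/
noncomputable def potUpTo {N : ℕ} (P : Play N) (n : ℕ) (C : ℤ × ℤ) : ℤ :=
  4 - (Nat.card {i : Fin N // (i : ℕ) < n ∧ C ∈ seg (P.q i) (P.d i)} : ℤ)

/-- The total potential of the board after the first `n` moves of a play:
the sum of the potentials of all crosses on the board. -/
noncomputable def totalPotUpTo {N : ℕ} (P : Play N) (n : ℕ) : ℤ :=
  ∑ᶠ C ∈ crossesUpTo P n, potUpTo P n C

/-! The last line consists of five points; the four other than the last cross are already on
the board after `N` moves. By rule (4) no earlier line in the same direction meets any of them,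
so each is covered by at most three earlier lines and has potential at least `1`. Since all
potentials are nonnegative (the lines through a point have distinct directions), the total
potential is at least `4`. -/

theorem ne_zero_of_mem_Dir {d : ℤ × ℤ} (hd : d ∈ Dir) : d ≠ 0 := by
  rcases hd with rfl | rfl | rfl | rfl <;> decide

theorem finite_Dir : Dir.Finite := by
  simp only [Dir, Set.finite_insert, Set.finite_singleton]

theorem ncard_Dir : Dir.ncard = 4 := by
  rw [Dir, Set.ncard_eq_toFinset_card']
  rfl

theorem seg_eq_image (q d : ℤ × ℤ) :
    seg q d = (fun t : ℕ => q + (t : ℤ) • d) '' Set.Iic 4 := by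
  ext p
  simp only [seg, Set.mem_ofPred_eq, Set.mem_image, Set.mem_Iic, eq_comm]

theorem ncard_seg (q : ℤ × ℤ) {d : ℤ × ℤ} (hd : d ≠ 0) : (seg q d).ncard = 5 := by
  have hinj : Function.Injective (fun t : ℕ => q + (t : ℤ) • d) :=
    (add_right_injective q).comp ((smul_left_injective ℤ hd).comp Nat.cast_injective)
  rw [seg_eq_image, Set.ncard_image_of_injective _ hinj, ← Finset.coe_Iic, Set.ncard_coe_finset]
  rfl

theorem finite_S0 : S0.Finite := by
  refine ((Set.finite_Icc (0 : ℤ) 9).prod (Set.finite_Icc (0 : ℤ) 9)).subset ?_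
  rintro ⟨x, y⟩ h
  simp only [S0, Set.mem_ofPred_eq] at h
  simp only [Set.mem_prod, Set.mem_Icc]
  omega

namespace Play

variable {N : ℕ} (P : Play N)

theorem eq_of_mem_seg_of_d_eq {i j : Fin N} {C : ℤ × ℤ} (hi : C ∈ seg (P.q i) (P.d i))
    (hj : C ∈ seg (P.q j) (P.d j)) (hd : P.d i = P.d j) : i = j := by
  by_contra hne
  rcases lt_or_gt_of_ne hne with h | h
  · exact Set.eq_empty_iff_forall_notMem.1 (P.disj j i h hd) C ⟨hj, hi⟩
  · exact Set.eq_empty_iff_forall_notMem.1 (P.disj i j h hd.symm) C ⟨hi, hj⟩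

theorem card_covering_le_ncard (n : ℕ) (C : ℤ × ℤ) {E : Set (ℤ × ℤ)} (hE : E.Finite)
    (hdir : ∀ i : Fin N, (i : ℕ) < n → C ∈ seg (P.q i) (P.d i) → P.d i ∈ E) :
    Nat.card {i : Fin N // (i : ℕ) < n ∧ C ∈ seg (P.q i) (P.d i)} ≤ E.ncard := by
  have : Finite E := hE
  rw [← Nat.card_coe_set_eq]
  refine Nat.card_le_card_of_injective (fun i => ⟨P.d i, hdir i i.2.1 i.2.2⟩) ?_
  intro ⟨i, _, hi⟩ ⟨j, _, hj⟩ h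
  exact Subtype.ext (P.eq_of_mem_seg_of_d_eq hi hj (congrArg Subtype.val h))

theorem potUpTo_nonneg (n : ℕ) (C : ℤ × ℤ) : 0 ≤ potUpTo P n C := by
  have h := P.card_covering_le_ncard n C finite_Dir (fun i _ _ => P.d_mem i)
  rw [ncard_Dir] at h
  unfold potUpTo
  omega

theorem one_le_potUpTo_of_mem_seg {n : ℕ} {i : Fin N} (hn : n ≤ i) {C : ℤ × ℤ}
    (hC : C ∈ seg (P.q i) (P.d i)) : 1 ≤ potUpTo P n C := by
  -- by rule (4), none of the first `n` lines through `C` has the direction of line `i`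
  have h := P.card_covering_le_ncard n C (E := Dir \ {P.d i}) finite_Dir.sdiff fun j hj hCj =>
    ⟨P.d_mem j, fun hd => by
      have := Fin.val_eq_of_eq (P.eq_of_mem_seg_of_d_eq hCj hC hd)
      omega⟩
  rw [Set.ncard_sdiff_singleton_of_mem (P.d_mem i), ncard_Dir] at h
  unfold potUpTo
  omega

theorem seg_diff_subset_crossesUpTo (i : Fin N) :
    seg (P.q i) (P.d i) \ {P.p i} ⊆ crossesUpTo P i := by
  rintro x ⟨hx, hne⟩
  rcases P.seg_sub i hx with h | ⟨j, hji, rfl⟩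
  · exact Or.inl h
  · exact Or.inr ⟨j, hji.lt_of_ne (by rintro rfl; exact hne rfl), rfl⟩

theorem finite_crossesUpTo (n : ℕ) : (crossesUpTo P n).Finite :=
  finite_S0.union ((Set.finite_range P.p).subset fun _ ⟨i, _, h⟩ => ⟨i, h⟩)

theorem ncard_le_totalPotUpTo {n : ℕ} {T : Set (ℤ × ℤ)} (hT : T ⊆ crossesUpTo P n)
    (hpos : ∀ C ∈ T, 1 ≤ potUpTo P n C) : (T.ncard : ℤ) ≤ totalPotUpTo P n := by
  have hfin := P.finite_crossesUpTo n
  have hTfin := hfin.subset hT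
  rw [totalPotUpTo, finsum_mem_eq_finite_toFinset_sum _ hfin, Set.ncard_eq_toFinset_card T hTfin]
  calc (hTfin.toFinset.card : ℤ) = ∑ _C ∈ hTfin.toFinset, 1 := by simp
    _ ≤ ∑ C ∈ hTfin.toFinset, potUpTo P n C :=
        Finset.sum_le_sum fun C hC => hpos C (hTfin.mem_toFinset.1 hC)
    _ ≤ ∑ C ∈ hfin.toFinset, potUpTo P n C :=
        Finset.sum_le_sum_of_subset_of_nonneg (Set.Finite.toFinset_subset_toFinset.2 hT)
          fun C _ _ => P.potUpTo_nonneg n C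

end Play

/-- If one more move can be played (i.e. the play has length `N + 1`), then the
total potential of the board after the first `N` moves is at least `4`. -/
theorem next_move_needs_potential_four (N : ℕ) (P : Play (N + 1)) :
    4 ≤ totalPotUpTo P N := by
  let last := Fin.last N
  have hcard : (seg (P.q last) (P.d last) \ {P.p last}).ncard = 4 := by
    rw [Set.ncard_sdiff_singleton_of_mem (P.p_mem last),
      ncard_seg _ (ne_zero_of_mem_Dir (P.d_mem last))]
  have h := P.ncard_le_totalPotUpTo (P.seg_diff_subset_crossesUpTo last)
    fun C hC => P.one_le_potUpTo_of_mem_seg le_rfl hC.1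
  rwa [hcard] at h
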